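/- arXiv:2005.08577 — 4 statements merged into one kernel-verified Lean document; each statement's English description precedes it below -/
import Mathlib

section
/- Let α, β be real numbers with α² + β² = 1 and αβ ≠ 0, let K = √(1 + 4α²β²), and set B₀ = (σz + 2αβ·σx)/K and B₁ = (σz − 2αβ·σx)/K. Then B₀ and B₁ are Hermitian with B₀² = B₁² = I, and for ψ = α·(e₀ ⊗ e₀) + β·(e₁ ⊗ e₁) one has ⟨ψ, (σz ⊗ B₀ + σz ⊗ B₁ + σx ⊗ B₀ − σx ⊗ B₁) ψ⟩ = 2√(1 + 4α²β²). -/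
open Matrix Kronecker

/-- Pauli matrix σz. -/
noncomputable def sigmaZ : Matrix (Fin 2) (Fin 2) ℂ := !![1, 0; 0, -1]

/-- Pauli matrix σx. -/
noncomputable def sigmaX : Matrix (Fin 2) (Fin 2) ℂ := !![0, 1; 1, 0]

/-- Standard basis vector |0⟩ of ℂ². -/
noncomputable def e0 : Fin 2 → ℂ := ![1, 0]

/-- Standard basis vector |1⟩ of ℂ². -/
noncomputable def e1 : Fin 2 → ℂ := ![0, 1]

/-- Tensor (Kronecker) product of two qubit vectors. -/
noncomputable def tens (u v : Fin 2 → ℂ) : Fin 2 × Fin 2 → ℂ := fun p => u p.1 * v p.2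

/-! σz and σx square to the identity and anticommute, so `(σz + c σx)² = (1 + c²) I`; with
`c = ±2αβ` and `K = √(1 + c²)` this makes `B₀, B₁` observables. The CHSH operator regroups as
`σz ⊗ (B₀ + B₁) + σx ⊗ (B₀ - B₁) = (2/K) (σz ⊗ σz + c σx ⊗ σx)`, whose two terms have
expectations `α² + β² = 1` and `2αβ = c` in `ψ`; the value is `2 (1 + c²) / K = 2K`. -/

section Anticommuting

variable {A : Type*} [Ring A]

theorem add_smul_mul_self_of_anticommute {R : Type*} [CommRing R] [Algebra R A] {a b : A}
    (ha : a * a = 1) (hb : b * b = 1) (hab : a * b + b * a = 0) (c : R) :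
    (a + c • b) * (a + c • b) = (1 + c ^ 2) • 1 := by
  calc (a + c • b) * (a + c • b) = a * a + c • (a * b + b * a) + c ^ 2 • (b * b) := by
        simp only [add_mul, mul_add, smul_mul_assoc, mul_smul_comm, smul_smul, smul_add]
        module
    _ = (1 + c ^ 2) • 1 := by rw [ha, hb, hab, smul_zero, add_zero, add_smul, one_smul]

theorem inv_smul_add_smul_mul_self_of_anticommute {𝕜 : Type*} [Field 𝕜] [Algebra 𝕜 A]
    {a b : A} (ha : a * a = 1) (hb : b * b = 1) (hab : a * b + b * a = 0) {c k : 𝕜}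
    (hk : k ^ 2 = 1 + c ^ 2) (hk0 : k ≠ 0) :
    k⁻¹ • (a + c • b) * k⁻¹ • (a + c • b) = 1 := by
  have hk_inv : k⁻¹ * k⁻¹ * k ^ 2 = 1 := by field_simp
  rw [smul_mul_smul_comm, add_smul_mul_self_of_anticommute ha hb hab, ← hk, smul_smul, hk_inv,
    one_smul]

end Anticommuting

theorem chsh_kronecker_eq {R l m n p : Type*} [Ring R] (A₀ A₁ : Matrix l m R)
    (B₀ B₁ : Matrix n p R) :
    A₀ ⊗ₖ B₀ + A₀ ⊗ₖ B₁ + A₁ ⊗ₖ B₀ - A₁ ⊗ₖ B₁ = A₀ ⊗ₖ (B₀ + B₁) + A₁ ⊗ₖ (B₀ - B₁) := by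
  ext i j
  simp only [Matrix.add_apply, Matrix.sub_apply, kroneckerMap_apply, mul_add, mul_sub]
  abel

theorem dotProduct_smul_add_smul_mulVec {R n : Type*} [CommSemiring R] [Fintype n]
    (v w : n → R) (r s : R) (M N : Matrix n n R) :
    v ⬝ᵥ ((r • M + s • N) *ᵥ w) = r * (v ⬝ᵥ (M *ᵥ w)) + s * (v ⬝ᵥ (N *ᵥ w)) := by
  rw [add_mulVec, smul_mulVec, smul_mulVec, dotProduct_add, dotProduct_smul, dotProduct_smul,
    smul_eq_mul, smul_eq_mul]

theorem sigmaZ_mul_self : sigmaZ * sigmaZ = 1 := by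
  simp [sigmaZ, one_fin_two]

theorem sigmaX_mul_self : sigmaX * sigmaX = 1 := by
  simp [sigmaX, one_fin_two]

theorem sigmaZ_anticommute_sigmaX : sigmaZ * sigmaX + sigmaX * sigmaZ = 0 := by
  ext i j; fin_cases i <;> fin_cases j <;> simp [sigmaZ, sigmaX]

theorem isHermitian_sigmaZ : sigmaZ.IsHermitian := by
  ext i j; fin_cases i <;> fin_cases j <;> simp [sigmaZ]

theorem isHermitian_sigmaX : sigmaX.IsHermitian := by
  ext i j; fin_cases i <;> fin_cases j <;> simp [sigmaX]

theorem Complex.isSelfAdjoint_ofReal (r : ℝ) : IsSelfAdjoint (r : ℂ) := Complex.conj_ofReal r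

noncomputable def gisinObservable (K c : ℝ) : Matrix (Fin 2) (Fin 2) ℂ :=
  (K : ℂ)⁻¹ • (sigmaZ + (c : ℂ) • sigmaX)

theorem gisinObservable_isHermitian (K c : ℝ) : (gisinObservable K c).IsHermitian :=
  (isHermitian_sigmaZ.add (isHermitian_sigmaX.smul (Complex.isSelfAdjoint_ofReal c))).smul
    (Complex.isSelfAdjoint_ofReal K).inv₀

theorem gisinObservable_mul_self {K c : ℝ} (hK : K ^ 2 = 1 + c ^ 2) (hK0 : K ≠ 0) :
    gisinObservable K c * gisinObservable K c = 1 :=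
  inv_smul_add_smul_mul_self_of_anticommute sigmaZ_mul_self sigmaX_mul_self
    sigmaZ_anticommute_sigmaX (by exact_mod_cast hK) (by exact_mod_cast hK0)

theorem gisinObservable_neg (K c : ℝ) :
    gisinObservable K (-c) = (K : ℂ)⁻¹ • (sigmaZ - (c : ℂ) • sigmaX) := by
  rw [gisinObservable, Complex.ofReal_neg, neg_smul, sub_eq_add_neg]

theorem gisinObservable_add_neg (K c : ℝ) :
    gisinObservable K c + gisinObservable K (-c) = (2 * (K : ℂ)⁻¹) • sigmaZ := by
  rw [gisinObservable_neg, gisinObservable]; module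

theorem gisinObservable_sub_neg (K c : ℝ) :
    gisinObservable K c - gisinObservable K (-c) = (2 * (K : ℂ)⁻¹ * c) • sigmaX := by
  rw [gisinObservable_neg, gisinObservable]; module

noncomputable def gisinState (α β : ℝ) : Fin 2 × Fin 2 → ℂ :=
  (α : ℂ) • tens e0 e0 + (β : ℂ) • tens e1 e1

theorem gisinState_expect_sigmaZ_sigmaZ (α β : ℝ) :
    star (gisinState α β) ⬝ᵥ ((sigmaZ ⊗ₖ sigmaZ) *ᵥ gisinState α β) =
      ((α ^ 2 + β ^ 2 : ℝ) : ℂ) := by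
  simp only [dotProduct, gisinState, e0, Complex.coe_smul, e1, Pi.star_apply, Pi.add_apply,
    Pi.smul_apply, tens, Complex.real_smul, star_add, star_mul', RCLike.star_def,
    Complex.conj_ofReal, mulVec, sigmaZ, kroneckerMap_apply, of_apply, cons_val', cons_val_fin_one,
    Fintype.sum_prod_type, Fin.sum_univ_two, Fin.isValue, cons_val_zero, mul_one, mul_zero,
    add_zero, cons_val_one, zero_add, map_one, map_zero, zero_mul, mul_neg, neg_mul, one_mul,
    neg_zero, neg_neg, Complex.ofReal_add, Complex.ofReal_pow]
  ring

theorem gisinState_expect_sigmaX_sigmaX (α β : ℝ) :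
    star (gisinState α β) ⬝ᵥ ((sigmaX ⊗ₖ sigmaX) *ᵥ gisinState α β) =
      ((2 * α * β : ℝ) : ℂ) := by
  simp only [dotProduct, gisinState, e0, Complex.coe_smul, e1, Pi.star_apply, Pi.add_apply,
    Pi.smul_apply, tens, Complex.real_smul, star_add, star_mul', RCLike.star_def,
    Complex.conj_ofReal, mulVec, sigmaX, kroneckerMap_apply, of_apply, cons_val', cons_val_fin_one,
    Fintype.sum_prod_type, Fin.sum_univ_two, Fin.isValue, cons_val_zero, mul_one, mul_zero,
    add_zero, cons_val_one, zero_add, map_one, map_zero, zero_mul, one_mul, Complex.ofReal_mul,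
    Complex.ofReal_ofNat]
  ring

theorem gisin_chsh_value_general (α β : ℝ) (hαβ : α ^ 2 + β ^ 2 = 1)
    (K : ℝ) (hK : K = Real.sqrt (1 + 4 * α ^ 2 * β ^ 2))
    (B0 B1 : Matrix (Fin 2) (Fin 2) ℂ)
    (hB0 : B0 = ((K : ℂ))⁻¹ • (sigmaZ + ((2 * α * β : ℝ) : ℂ) • sigmaX))
    (hB1 : B1 = ((K : ℂ))⁻¹ • (sigmaZ - ((2 * α * β : ℝ) : ℂ) • sigmaX))
    (ψ : Fin 2 × Fin 2 → ℂ)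
    (hψ : ψ = (α : ℂ) • tens e0 e0 + (β : ℂ) • tens e1 e1) :
    B0.IsHermitian ∧ B1.IsHermitian ∧ B0 * B0 = 1 ∧ B1 * B1 = 1 ∧
    star ψ ⬝ᵥ ((sigmaZ ⊗ₖ B0 + sigmaZ ⊗ₖ B1 + sigmaX ⊗ₖ B0 - sigmaX ⊗ₖ B1) *ᵥ ψ) =
      ((2 * Real.sqrt (1 + 4 * α ^ 2 * β ^ 2) : ℝ) : ℂ) := by
  set c : ℝ := 2 * α * β
  have hK0 : K ≠ 0 := by rw [hK]; positivity
  have hK2 : K ^ 2 = 1 + c ^ 2 := by rw [hK, Real.sq_sqrt (by positivity)]; ring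
  obtain rfl : B0 = gisinObservable K c := hB0
  obtain rfl : B1 = gisinObservable K (-c) := hB1.trans (gisinObservable_neg K c).symm
  obtain rfl : ψ = gisinState α β := hψ
  refine ⟨gisinObservable_isHermitian K c, gisinObservable_isHermitian K (-c),
    gisinObservable_mul_self hK2 hK0, gisinObservable_mul_self (by rwa [neg_sq]) hK0, ?_⟩
  have hvalue : 2 * K⁻¹ * 1 + 2 * K⁻¹ * c * c = 2 * K := by
    field_simp
    linear_combination -hK2
  rw [chsh_kronecker_eq, gisinObservable_add_neg, gisinObservable_sub_neg, kronecker_smul,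
    kronecker_smul, dotProduct_smul_add_smul_mulVec, gisinState_expect_sigmaZ_sigmaZ,
    gisinState_expect_sigmaX_sigmaX, hαβ, ← hK]
  exact_mod_cast hvalue

/-- Gisin's computation: with K = √(1 + 4α²β²), B₀ = (σz + 2αβ·σx)/K and
B₁ = (σz − 2αβ·σx)/K are ±1-valued observables (Hermitian with square the identity),
and the state ψ = α|00⟩ + β|11⟩ attains the CHSH value 2√(1 + 4α²β²). -/
theorem gisin_chsh_value (α β : ℝ) (hαβ : α ^ 2 + β ^ 2 = 1) (hne : α * β ≠ 0)
    (K : ℝ) (hK : K = Real.sqrt (1 + 4 * α ^ 2 * β ^ 2))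
    (B0 B1 : Matrix (Fin 2) (Fin 2) ℂ)
    (hB0 : B0 = ((K : ℂ))⁻¹ • (sigmaZ + ((2 * α * β : ℝ) : ℂ) • sigmaX))
    (hB1 : B1 = ((K : ℂ))⁻¹ • (sigmaZ - ((2 * α * β : ℝ) : ℂ) • sigmaX))
    (ψ : Fin 2 × Fin 2 → ℂ)
    (hψ : ψ = (α : ℂ) • tens e0 e0 + (β : ℂ) • tens e1 e1) :
    B0.IsHermitian ∧ B1.IsHermitian ∧ B0 * B0 = 1 ∧ B1 * B1 = 1 ∧
    star ψ ⬝ᵥ ((sigmaZ ⊗ₖ B0 + sigmaZ ⊗ₖ B1 + sigmaX ⊗ₖ B0 - sigmaX ⊗ₖ B1) *ᵥ ψ) =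
      ((2 * Real.sqrt (1 + 4 * α ^ 2 * β ^ 2) : ℝ) : ℂ) :=
  gisin_chsh_value_general α β hαβ K hK B0 B1 hB0 hB1 ψ hψ
end

section
/- Let (Λ, μ) be a probability space and let a, b : Λ → Fin 2 → ℝ be measurable functions (with a λ x and b λ y integrable in λ for each setting) such that |a λ x| ≤ 1 and |b λ y| ≤ 1 for all λ ∈ Λ and all settings x, y ∈ Fin 2. Then |∫ (a λ 0 · b λ 0 + a λ 0 · b λ 1 + a λ 1 · b λ 0 − a λ 1 · b λ 1) dμ(λ)| ≤ 2. -/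
open MeasureTheory

/-! Pointwise, the CHSH combination factors as `a₀ (b₀ + b₁) + a₁ (b₀ - b₁)`, and
`|b₀ + b₁| + |b₀ - b₁| = 2 max |b₀| |b₁| ≤ 2`; averaging a quantity bounded by 2 against a
probability measure keeps it bounded by 2. -/

section Ring

variable {α : Type*} [CommRing α] [LinearOrder α] [IsStrictOrderedRing α]

theorem abs_add_add_abs_sub_le_two {x y : α} (hx : |x| ≤ 1) (hy : |y| ≤ 1) :
    |x + y| + |x - y| ≤ 2 := by
  obtain ⟨hx₁, hx₂⟩ := abs_le.mp hx
  obtain ⟨hy₁, hy₂⟩ := abs_le.mp hy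
  rcases abs_cases (x + y) with ⟨hplus, -⟩ | ⟨hplus, -⟩ <;>
    rcases abs_cases (x - y) with ⟨hminus, -⟩ | ⟨hminus, -⟩ <;>
      rw [hplus, hminus] <;> linarith

theorem abs_chsh_le_two {a₀ a₁ b₀ b₁ : α} (ha₀ : |a₀| ≤ 1) (ha₁ : |a₁| ≤ 1)
    (hb₀ : |b₀| ≤ 1) (hb₁ : |b₁| ≤ 1) :
    |a₀ * b₀ + a₀ * b₁ + a₁ * b₀ - a₁ * b₁| ≤ 2 := by
  have hfactor : a₀ * b₀ + a₀ * b₁ + a₁ * b₀ - a₁ * b₁ = a₀ * (b₀ + b₁) + a₁ * (b₀ - b₁) := by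
    ring
  calc |a₀ * b₀ + a₀ * b₁ + a₁ * b₀ - a₁ * b₁|
      ≤ |a₀| * |b₀ + b₁| + |a₁| * |b₀ - b₁| := by
        rw [hfactor, ← abs_mul, ← abs_mul]; exact abs_add_le _ _
    _ ≤ |b₀ + b₁| + |b₀ - b₁| := by
        gcongr <;> exact mul_le_of_le_one_left (abs_nonneg _) ‹_›
    _ ≤ 2 := abs_add_add_abs_sub_le_two hb₀ hb₁

end Ring

theorem chsh_inequality_local_model_general
    {Λ : Type*} [MeasurableSpace Λ] (μ : Measure Λ) [IsProbabilityMeasure μ]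
    (a b : Λ → Fin 2 → ℝ)
    (habd : ∀ l : Λ, ∀ x : Fin 2, |a l x| ≤ 1)
    (hbbd : ∀ l : Λ, ∀ y : Fin 2, |b l y| ≤ 1) :
    |∫ l, (a l 0 * b l 0 + a l 0 * b l 1 + a l 1 * b l 0 - a l 1 * b l 1) ∂μ| ≤ 2 := by
  have hpointwise : ∀ᵐ l ∂μ, ‖a l 0 * b l 0 + a l 0 * b l 1 + a l 1 * b l 0 - a l 1 * b l 1‖ ≤ 2 :=
    .of_forall fun l => abs_chsh_le_two (habd l 0) (habd l 1) (hbbd l 0) (hbbd l 1)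
  simpa using norm_integral_le_of_norm_le_const hpointwise

/-- CHSH inequality for local hidden-variable models: if a probability space (Λ, μ) carries
measurable, integrable local response functions `a λ x`, `b λ y` bounded in [−1, 1], then the
μ-average of the CHSH combination is at most 2 in absolute value. -/
theorem chsh_inequality_local_model
    {Λ : Type*} [MeasurableSpace Λ] (μ : Measure Λ) [IsProbabilityMeasure μ]
    (a b : Λ → Fin 2 → ℝ)
    (hameas : ∀ x : Fin 2, Measurable fun l => a l x)
    (hbmeas : ∀ y : Fin 2, Measurable fun l => b l y)
    (haint : ∀ x : Fin 2, Integrable (fun l => a l x) μ)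
    (hbint : ∀ y : Fin 2, Integrable (fun l => b l y) μ)
    (habd : ∀ l : Λ, ∀ x : Fin 2, |a l x| ≤ 1)
    (hbbd : ∀ l : Λ, ∀ y : Fin 2, |b l y| ≤ 1) :
    |∫ l, (a l 0 * b l 0 + a l 0 * b l 1 + a l 1 * b l 0 - a l 1 * b l 1) ∂μ| ≤ 2 :=
  chsh_inequality_local_model_general μ a b habd hbbd
end

section
/- Let (Λ, μ) be a probability space, f : Λ → ℝ integrable, and A, B ⊆ Λ disjoint measurable sets with μ(A) = μ(B) = Ω/2 for some real Ω. Suppose f(λ) ≤ 2 for μ-almost every λ ∈ A ∪ B, f(λ) ≤ 4 for μ-almost every λ ∈ Λ, and ∫ f dμ ≥ 2√2. Then Ω ≤ 2 − √2. -/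
/-! Splitting `∫ f` over `A ∪ B`, of measure `Ω`, and its complement gives
`2√2 ≤ ∫ f ≤ 2Ω + 4(1 - Ω)`. -/

open MeasureTheory

section

variable {α : Type*} [MeasurableSpace α] {μ : Measure α} {f : α → ℝ} {s : Set α} {c : ℝ}

theorem setIntegral_le_of_ae_le_const (hs : MeasurableSet s) (hμs : μ s ≠ ⊤)
    (hf : IntegrableOn f s μ) (hc : ∀ᵐ x ∂μ, x ∈ s → f x ≤ c) :
    ∫ x in s, f x ∂μ ≤ c * μ.real s := by
  calc ∫ x in s, f x ∂μ ≤ ∫ _ in s, c ∂μ :=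
        setIntegral_mono_on_ae hf (integrableOn_const hμs) hs hc
    _ = c * μ.real s := by rw [setIntegral_const, smul_eq_mul, mul_comm]

theorem integral_le_of_ae_le_const_on_and_compl [IsFiniteMeasure μ] {a b : ℝ}
    (hf : Integrable f μ) (hs : MeasurableSet s)
    (ha : ∀ᵐ x ∂μ, x ∈ s → f x ≤ a) (hb : ∀ᵐ x ∂μ, x ∈ sᶜ → f x ≤ b) :
    ∫ x, f x ∂μ ≤ a * μ.real s + b * μ.real sᶜ := by
  rw [← integral_add_compl hs hf]
  exact add_le_add (setIntegral_le_of_ae_le_const hs (measure_ne_top μ s) hf.integrableOn ha)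
    (setIntegral_le_of_ae_le_const hs.compl (measure_ne_top μ sᶜ) hf.integrableOn hb)

end

/-- Threshold bound on the degree of epistemicity: if disjoint measurable sets A, B each have
measure Ω/2, f ≤ 2 a.e. on A ∪ B, f ≤ 4 a.e., and ∫ f dμ ≥ 2√2, then Ω ≤ 2 − √2. -/
theorem epistemicity_threshold_bound
    {Λ : Type*} [MeasurableSpace Λ] (μ : Measure Λ) [IsProbabilityMeasure μ]
    (f : Λ → ℝ) (hf : Integrable f μ)
    (A B : Set Λ) (hA : MeasurableSet A) (hB : MeasurableSet B)
    (hdisj : Disjoint A B) (Ω : ℝ)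
    (hμA : (μ A).toReal = Ω / 2) (hμB : (μ B).toReal = Ω / 2)
    (h2 : ∀ᵐ l ∂μ, l ∈ A ∪ B → f l ≤ 2)
    (h4 : ∀ᵐ l ∂μ, f l ≤ 4)
    (hint : 2 * Real.sqrt 2 ≤ ∫ l, f l ∂μ) :
    Ω ≤ 2 - Real.sqrt 2 := by
  have hS : MeasurableSet (A ∪ B) := hA.union hB
  have hμS : μ.real (A ∪ B) = Ω := by
    rw [measureReal_union hdisj hB, Measure.real, Measure.real, hμA, hμB]
    ring
  have hbound := integral_le_of_ae_le_const_on_and_compl hf hS h2 (h4.mono fun _ h _ => h)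
  rw [probReal_compl_eq_one_sub hS, hμS] at hbound
  linarith
end

section
/- Let (Λ, μ) be a probability space, f : Λ → ℝ integrable, t a real number with 0 < t < 1, and A, B ⊆ Λ disjoint measurable sets with μ(A) = t·Ω₁ and μ(B) = (1 − t)·Ω₂ for some reals Ω₁, Ω₂. Suppose f(λ) ≤ 2 for μ-almost every λ ∈ A ∪ B, f(λ) ≤ 4 for μ-almost every λ ∈ Λ, and ∫ f dμ ≥ 2√(1 + 4t(1 − t)). Then t·Ω₁ + (1 − t)·Ω₂ ≤ 2 − √(1 + 4t(1 − t)). -/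
/-! Split `∫ f dμ` over `S = A ∪ B` and its complement: with `f ≤ 2` on `S` and `f ≤ 4` off it,
`∫ f dμ ≤ 2 μ(S) + 4 (1 - μ(S)) = 4 - 2 μ(S)`, while `μ(S) = t Ω₁ + (1 - t) Ω₂` by disjointness.
Comparing with the lower bound `2 √(1 + 4t(1 - t)) ≤ ∫ f dμ` gives the claim. -/

open MeasureTheory

namespace MeasureTheory

variable {Λ : Type*} [MeasurableSpace Λ] {μ : Measure Λ} {f : Λ → ℝ} {s : Set Λ} {a b : ℝ}

lemma setIntegral_le_mul_measureReal [IsFiniteMeasure μ] (hs : MeasurableSet s)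
    (hf : Integrable f μ) (ha : ∀ᵐ x ∂μ, x ∈ s → f x ≤ a) :
    ∫ x in s, f x ∂μ ≤ a * μ.real s := by
  calc ∫ x in s, f x ∂μ ≤ ∫ _ in s, a ∂μ :=
        setIntegral_mono_on_ae hf.integrableOn integrableOn_const hs ha
    _ = a * μ.real s := by rw [setIntegral_const, smul_eq_mul, mul_comm]

lemma integral_le_mul_measureReal_add_mul_measureReal_compl [IsFiniteMeasure μ]
    (hs : MeasurableSet s) (hf : Integrable f μ) (ha : ∀ᵐ x ∂μ, x ∈ s → f x ≤ a)
    (hb : ∀ᵐ x ∂μ, x ∈ sᶜ → f x ≤ b) :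
    ∫ x, f x ∂μ ≤ a * μ.real s + b * μ.real sᶜ := by
  rw [← integral_add_compl hs hf]
  exact add_le_add (setIntegral_le_mul_measureReal hs hf ha)
    (setIntegral_le_mul_measureReal hs.compl hf hb)

lemma integral_le_of_ae_le_on_of_ae_le [IsProbabilityMeasure μ] (hs : MeasurableSet s)
    (hf : Integrable f μ) (ha : ∀ᵐ x ∂μ, x ∈ s → f x ≤ a) (hb : ∀ᵐ x ∂μ, f x ≤ b) :
    ∫ x, f x ∂μ ≤ b - (b - a) * μ.real s := by
  have h := integral_le_mul_measureReal_add_mul_measureReal_compl hs hf ha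
    (hb.mono fun _ hx _ ↦ hx)
  rw [probReal_compl_eq_one_sub hs] at h
  linarith

end MeasureTheory

theorem epistemicity_general_bound_general
    {Λ : Type*} [MeasurableSpace Λ] (μ : Measure Λ) [IsProbabilityMeasure μ]
    (f : Λ → ℝ) (hf : Integrable f μ)
    (t : ℝ)
    (A B : Set Λ) (hA : MeasurableSet A) (hB : MeasurableSet B)
    (hdisj : Disjoint A B) (Ω₁ Ω₂ : ℝ)
    (hμA : (μ A).toReal = t * Ω₁) (hμB : (μ B).toReal = (1 - t) * Ω₂)
    (h2 : ∀ᵐ l ∂μ, l ∈ A ∪ B → f l ≤ 2)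
    (h4 : ∀ᵐ l ∂μ, f l ≤ 4)
    (hint : 2 * Real.sqrt (1 + 4 * t * (1 - t)) ≤ ∫ l, f l ∂μ) :
    t * Ω₁ + (1 - t) * Ω₂ ≤ 2 - Real.sqrt (1 + 4 * t * (1 - t)) := by
  have hμS : μ.real (A ∪ B) = t * Ω₁ + (1 - t) * Ω₂ := by
    rw [measureReal_union hdisj hB, measureReal_def, measureReal_def, hμA, hμB]
  have hbound := integral_le_of_ae_le_on_of_ae_le (hA.union hB) hf h2 h4
  rw [hμS] at hbound
  linarith

/-- General bound on the degree of epistemicity: with t = |α|² ∈ (0,1), if disjoint measurable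
sets A, B have measures t·Ω₁ and (1−t)·Ω₂, f ≤ 2 a.e. on A ∪ B, f ≤ 4 a.e., and
∫ f dμ ≥ 2√(1 + 4t(1−t)), then t·Ω₁ + (1−t)·Ω₂ ≤ 2 − √(1 + 4t(1−t)). -/
theorem epistemicity_general_bound
    {Λ : Type*} [MeasurableSpace Λ] (μ : Measure Λ) [IsProbabilityMeasure μ]
    (f : Λ → ℝ) (hf : Integrable f μ)
    (t : ℝ) (ht0 : 0 < t) (ht1 : t < 1)
    (A B : Set Λ) (hA : MeasurableSet A) (hB : MeasurableSet B)
    (hdisj : Disjoint A B) (Ω₁ Ω₂ : ℝ)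
    (hμA : (μ A).toReal = t * Ω₁) (hμB : (μ B).toReal = (1 - t) * Ω₂)
    (h2 : ∀ᵐ l ∂μ, l ∈ A ∪ B → f l ≤ 2)
    (h4 : ∀ᵐ l ∂μ, f l ≤ 4)
    (hint : 2 * Real.sqrt (1 + 4 * t * (1 - t)) ≤ ∫ l, f l ∂μ) :
    t * Ω₁ + (1 - t) * Ω₂ ≤ 2 - Real.sqrt (1 + 4 * t * (1 - t)) :=
  epistemicity_general_bound_general μ f hf t A B hA hB hdisj Ω₁ Ω₂ hμA hμB h2 h4 hint
end
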